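/- arXiv:1112.6177 — 5 statements merged into one kernel-verified Lean document; each statement's English description precedes it below -/
import Mathlib

section
/- With φ(x,y) := (1/2) e₃·(y ∧ x), for all x, z₁, z₂ ∈ ℝ³ one has |φ(x,z₁) + φ(z₁,z₂) + φ(z₂,x)| ≤ |x − z₁| · |z₁ − z₂|. -/
noncomputable section

abbrev E3 := EuclideanSpace ℝ (Fin 3)

/-- The magnetic phase `φ(x,y) = (1/2) e₃ ⬝ (y ∧ x)` in coordinates. -/
def phi (x y : E3) : ℝ := (1 / 2) * (y 0 * x 1 - y 1 * x 0)

theorem phase_sum_bound (x z₁ z₂ : E3) :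
    |phi x z₁ + phi z₁ z₂ + phi z₂ x| ≤ ‖x - z₁‖ * ‖z₁ - z₂‖ := by
  have normsq : ∀ v : E3, ‖v‖ ^ 2 = (v 0) ^ 2 + (v 1) ^ 2 + (v 2) ^ 2 := by
    intro v
    rw [EuclideanSpace.norm_eq, Real.sq_sqrt (by positivity)]
    simp [Fin.sum_univ_three, sq_abs]
  have ha := normsq (x - z₁)
  have hb := normsq (z₁ - z₂)
  simp only [PiLp.sub_apply] at ha hb
  have h1 : (0:ℝ) ≤ ‖x - z₁‖ := norm_nonneg _
  have h2 : (0:ℝ) ≤ ‖z₁ - z₂‖ := norm_nonneg _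
  simp only [phi]
  rw [abs_le]
  constructor <;>
    nlinarith [sq_nonneg ((x 0 - z₁ 0) * (z₁ 0 - z₂ 0) + (x 1 - z₁ 1) * (z₁ 1 - z₂ 1)),
      sq_nonneg (x 2 - z₁ 2), sq_nonneg (z₁ 2 - z₂ 2), mul_nonneg h1 h2,
      sq_nonneg ((x 0 - z₁ 0) * (z₁ 1 - z₂ 1) - (x 1 - z₁ 1) * (z₁ 0 - z₂ 0)),
      sq_nonneg (‖x - z₁‖ - ‖z₁ - z₂‖), sq_nonneg (‖x - z₁‖ + ‖z₁ - z₂‖)]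
end
end

section
/- For all real δb and all x, z₁, z₂ ∈ ℝ³, |exp(i·δb·(φ(x,z₁) + φ(z₁,z₂) + φ(z₂,x))) − 1| ≤ |δb| · |x − z₁| · |z₁ − z₂|, where φ is the magnetic phase. -/
noncomputable section

/-! The phase `φ` is bilinear and antisymmetric, so the cyclic sum `φ(x,z₁) + φ(z₁,z₂) + φ(z₂,x)`
collapses to `φ(x - z₁, z₁ - z₂)`, half of a planar cross product, which Cauchy–Schwarz bounds by
`|x - z₁| |z₁ - z₂| / 2`. Combine with `|e^{it} - 1| ≤ |t|`. -/

theorem EuclideanSpace.sq_add_sq_le_norm_sq {ι : Type*} [Fintype ι] (a : EuclideanSpace ℝ ι)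
    {i j : ι} (hij : i ≠ j) : a i ^ 2 + a j ^ 2 ≤ ‖a‖ ^ 2 := by
  classical
  rw [EuclideanSpace.real_norm_sq_eq, ← Finset.sum_pair (f := fun k => a k ^ 2) hij]
  exact Finset.sum_le_sum_of_subset_of_nonneg (Finset.subset_univ _)
    fun k _ _ => sq_nonneg (a k)

theorem phi_sub_sub (x y z : E3) :
    phi (x - y) (y - z) = phi x y + phi y z + phi z x := by
  simp only [phi, PiLp.sub_apply]
  ring

theorem abs_phi_le (a b : E3) : |phi a b| ≤ ‖a‖ * ‖b‖ / 2 := by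
  have hcross : |b 0 * a 1 - b 1 * a 0| ≤ ‖a‖ * ‖b‖ := by
    refine abs_le_of_sq_le_sq ?_ (by positivity)
    calc (b 0 * a 1 - b 1 * a 0) ^ 2
        ≤ (b 0 * a 1 - b 1 * a 0) ^ 2 + (a 0 * b 0 + a 1 * b 1) ^ 2 :=
          le_add_of_nonneg_right (sq_nonneg _)
      _ = (a 0 ^ 2 + a 1 ^ 2) * (b 0 ^ 2 + b 1 ^ 2) := by ring
      _ ≤ ‖a‖ ^ 2 * ‖b‖ ^ 2 := by
          gcongr
          exacts [a.sq_add_sq_le_norm_sq (by decide), b.sq_add_sq_le_norm_sq (by decide)]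
      _ = (‖a‖ * ‖b‖) ^ 2 := by ring
  rw [phi, abs_mul, abs_of_pos one_half_pos]
  linarith

theorem exp_phase_sum_bound (δb : ℝ) (x z₁ z₂ : E3) :
    ‖Complex.exp (Complex.I * (δb * (phi x z₁ + phi z₁ z₂ + phi z₂ x))) - 1‖ ≤
      |δb| * (‖x - z₁‖ * ‖z₁ - z₂‖) := by
  have hphase : |phi x z₁ + phi z₁ z₂ + phi z₂ x| ≤ ‖x - z₁‖ * ‖z₁ - z₂‖ := by
    rw [← phi_sub_sub]
    linarith [abs_phi_le (x - z₁) (z₁ - z₂),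
      mul_nonneg (norm_nonneg (x - z₁)) (norm_nonneg (z₁ - z₂))]
  have hexp :=
    Real.norm_exp_I_mul_ofReal_sub_one_le (x := δb * (phi x z₁ + phi z₁ z₂ + phi z₂ x))
  rw [Real.norm_eq_abs, abs_mul] at hexp
  push_cast at hexp
  exact hexp.trans (mul_le_mul_of_nonneg_left hphase (abs_nonneg δb))
end
end

section
/- Let K₁, K₂ : ℝ³×ℝ³ → ℂ be measurable kernels satisfying |K_l(x,y)| ≤ c_l e^{−γ_l|x−y|}/|x−y| for x ≠ y (l = 1,2), with constants c_l, γ_l > 0. Set γ := min{γ₁,γ₂}. Then there is a constant c > 0 such that for all x, y ∈ ℝ³: ∫_{ℝ³} |K₁(x,z) K₂(z,y)| dz ≤ (c/γ) e^{−(γ/2)|x−y|}. -/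
/-!
Split the exponentials: since `γ ≤ γ₁, γ₂` and `|x - y| ≤ |x - z| + |z - y|`,
`e^{-γ₁|x-z|} e^{-γ₂|z-y|} ≤ e^{-(γ/2)|x-y|} · e^{-(γ₁/2)|x-z|} e^{-(γ₂/2)|z-y|}`.
What remains of the integrand is a product `p(z) q(z)` with
`p(z)² = e^{-γ₁|x-z|}/|x-z|²`, `q(z)² = e^{-γ₂|z-y|}/|z-y|²`, and `2pq ≤ p² + q²` reduces the
bound to the radial integral `∫_{ℝ³} e^{-ς|u|}/|u|² du = 4π/ς`, which is at most `4π/γ` for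
`ς = γ₁, γ₂`.
-/

open MeasureTheory ENNReal

noncomputable section

open Real

lemma integrable_exp_neg_mul_norm_div_sq {ς : ℝ} (hς : 0 < ς) :
    Integrable fun v : E3 => exp (-ς * ‖v‖) / ‖v‖ ^ 2 := by
  rw [integrable_fun_norm_addHaar volume (f := fun r => exp (-ς * r) / r ^ 2),
    finrank_euclideanSpace_fin]
  refine (exp_neg_integrableOn_Ioi 0 hς).congr_fun (fun r (hr : 0 < r) => ?_) measurableSet_Ioi
  simp only [smul_eq_mul]
  field_simp

lemma integral_exp_neg_mul_norm_div_sq {ς : ℝ} (hς : 0 < ς) :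
    ∫ v : E3, exp (-ς * ‖v‖) / ‖v‖ ^ 2 = 4 * π / ς := by
  have radial : ∫ r in Set.Ioi (0 : ℝ), r ^ 2 • (exp (-ς * r) / r ^ 2) = 1 / ς := by
    rw [setIntegral_congr_fun measurableSet_Ioi (g := fun r => exp (-ς * r)),
      integral_exp_mul_Ioi (by linarith) 0]
    · simp
    · intro r (hr : 0 < r)
      simp only [smul_eq_mul]
      field_simp
  rw [integral_fun_norm_addHaar volume (fun r => exp (-ς * r) / r ^ 2),
    finrank_euclideanSpace_fin, radial, Measure.real, EuclideanSpace.volume_ball_fin_three,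
    ofReal_one, one_pow, one_mul, toReal_ofReal (by positivity), nsmul_eq_mul, smul_eq_mul]
  field_simp
  ring

lemma lintegral_exp_neg_mul_norm_sub_div_sq {ς : ℝ} (hς : 0 < ς) (x : E3) :
    ∫⁻ z : E3, ENNReal.ofReal (exp (-ς * ‖z - x‖) / ‖z - x‖ ^ 2) =
      ENNReal.ofReal (4 * π / ς) := by
  rw [lintegral_sub_right_eq_self (fun v => ENNReal.ofReal (exp (-ς * ‖v‖) / ‖v‖ ^ 2)) x,
    ← integral_exp_neg_mul_norm_div_sq hς,
    ofReal_integral_eq_lintegral_ofReal (integrable_exp_neg_mul_norm_div_sq hς)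
      (ae_of_all _ fun v => by positivity)]


lemma exp_neg_half_mul_mul_exp_neg_half_mul_le {γ γ₁ γ₂ a b d : ℝ} (hγ : 0 ≤ γ) (h₁ : γ ≤ γ₁)
    (h₂ : γ ≤ γ₂) (ha : 0 ≤ a) (hb : 0 ≤ b) (hd : d ≤ a + b) :
    exp (-(γ₁ / 2) * a) * exp (-(γ₂ / 2) * b) ≤ exp (-(γ / 2) * d) := by
  rw [← exp_add, exp_le_exp]
  nlinarith [mul_le_mul_of_nonneg_right h₁ ha, mul_le_mul_of_nonneg_right h₂ hb,
    mul_le_mul_of_nonneg_left hd hγ]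

lemma exp_div_mul_exp_div_le {γ γ₁ γ₂ a b d : ℝ} (hγ : 0 ≤ γ) (h₁ : γ ≤ γ₁) (h₂ : γ ≤ γ₂)
    (ha : 0 < a) (hb : 0 < b) (hd : d ≤ a + b) :
    exp (-γ₁ * a) / a * (exp (-γ₂ * b) / b) ≤
      exp (-(γ / 2) * d) * ((exp (-γ₁ * a) / a ^ 2 + exp (-γ₂ * b) / b ^ 2) / 2) := by
  set e₁ := exp (-(γ₁ / 2) * a)
  set e₂ := exp (-(γ₂ / 2) * b)
  have sq₁ : exp (-γ₁ * a) = e₁ ^ 2 := by rw [sq, ← exp_add]; ring_nf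
  have sq₂ : exp (-γ₂ * b) = e₂ ^ 2 := by rw [sq, ← exp_add]; ring_nf
  have am_gm : e₁ / a * (e₂ / b) ≤ ((e₁ / a) ^ 2 + (e₂ / b) ^ 2) / 2 := by
    linarith [two_mul_le_add_sq (e₁ / a) (e₂ / b)]
  calc exp (-γ₁ * a) / a * (exp (-γ₂ * b) / b) = e₁ * e₂ * (e₁ / a * (e₂ / b)) := by
        rw [sq₁, sq₂]; ring
    _ ≤ exp (-(γ / 2) * d) * (((e₁ / a) ^ 2 + (e₂ / b) ^ 2) / 2) :=
        mul_le_mul (exp_neg_half_mul_mul_exp_neg_half_mul_le hγ h₁ h₂ ha.le hb.le hd) am_gm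
          (by positivity) (exp_pos _).le
    _ = exp (-(γ / 2) * d) * ((exp (-γ₁ * a) / a ^ 2 + exp (-γ₂ * b) / b ^ 2) / 2) := by
        rw [sq₁, sq₂]; ring

lemma norm_mul_norm_le_of_norm_le_exp_div {E F : Type*} [NormedAddCommGroup E]
    [SeminormedAddCommGroup F] {K₁ K₂ : E → E → F} {c₁ c₂ γ γ₁ γ₂ : ℝ}
    (hc₁ : 0 ≤ c₁) (hc₂ : 0 ≤ c₂) (hγ : 0 ≤ γ) (h₁ : γ ≤ γ₁) (h₂ : γ ≤ γ₂)
    (hb₁ : ∀ x y : E, x ≠ y → ‖K₁ x y‖ ≤ c₁ * exp (-γ₁ * ‖x - y‖) / ‖x - y‖)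
    (hb₂ : ∀ x y : E, x ≠ y → ‖K₂ x y‖ ≤ c₂ * exp (-γ₂ * ‖x - y‖) / ‖x - y‖)
    {x y z : E} (hzx : z ≠ x) (hzy : z ≠ y) :
    ‖K₁ x z‖ * ‖K₂ z y‖ ≤ c₁ * c₂ / 2 * exp (-(γ / 2) * ‖x - y‖) *
      (exp (-γ₁ * ‖z - x‖) / ‖z - x‖ ^ 2 + exp (-γ₂ * ‖z - y‖) / ‖z - y‖ ^ 2) := by
  have bound₁ := hb₁ x z hzx.symm
  rw [norm_sub_rev] at bound₁
  calc ‖K₁ x z‖ * ‖K₂ z y‖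
      ≤ c₁ * exp (-γ₁ * ‖z - x‖) / ‖z - x‖ * (c₂ * exp (-γ₂ * ‖z - y‖) / ‖z - y‖) :=
        mul_le_mul bound₁ (hb₂ z y hzy) (norm_nonneg _) (by positivity)
    _ = c₁ * c₂ * (exp (-γ₁ * ‖z - x‖) / ‖z - x‖ * (exp (-γ₂ * ‖z - y‖) / ‖z - y‖)) := by ring
    _ ≤ c₁ * c₂ * (exp (-(γ / 2) * ‖x - y‖) *
          ((exp (-γ₁ * ‖z - x‖) / ‖z - x‖ ^ 2 + exp (-γ₂ * ‖z - y‖) / ‖z - y‖ ^ 2) / 2)) := by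
        refine mul_le_mul_of_nonneg_left (exp_div_mul_exp_div_le hγ h₁ h₂
          (norm_pos_iff.2 (sub_ne_zero.2 hzx)) (norm_pos_iff.2 (sub_ne_zero.2 hzy)) ?_)
          (by positivity)
        simpa [norm_sub_rev z x] using norm_sub_le_norm_sub_add_norm_sub x z y
    _ = _ := by ring

lemma lintegral_nnnorm_mul_nnnorm_le {F : Type*} [SeminormedAddCommGroup F]
    {K₁ K₂ : E3 → E3 → F} {c₁ c₂ γ γ₁ γ₂ : ℝ}
    (hc₁ : 0 ≤ c₁) (hc₂ : 0 ≤ c₂) (hγ : 0 ≤ γ) (h₁ : γ ≤ γ₁) (h₂ : γ ≤ γ₂)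
    (hγ₁ : 0 < γ₁) (hγ₂ : 0 < γ₂)
    (hb₁ : ∀ x y : E3, x ≠ y → ‖K₁ x y‖ ≤ c₁ * exp (-γ₁ * ‖x - y‖) / ‖x - y‖)
    (hb₂ : ∀ x y : E3, x ≠ y → ‖K₂ x y‖ ≤ c₂ * exp (-γ₂ * ‖x - y‖) / ‖x - y‖) (x y : E3) :
    ∫⁻ z : E3, (‖K₁ x z‖₊ : ℝ≥0∞) * ‖K₂ z y‖₊ ≤
      ENNReal.ofReal (c₁ * c₂ / 2 * exp (-(γ / 2) * ‖x - y‖) * (4 * π / γ₁ + 4 * π / γ₂)) := by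
  set C := c₁ * c₂ / 2 * exp (-(γ / 2) * ‖x - y‖)
  have pointwise : ∀ᵐ z : E3, (‖K₁ x z‖₊ : ℝ≥0∞) * ‖K₂ z y‖₊ ≤
      ENNReal.ofReal C * (ENNReal.ofReal (exp (-γ₁ * ‖z - x‖) / ‖z - x‖ ^ 2) +
        ENNReal.ofReal (exp (-γ₂ * ‖z - y‖) / ‖z - y‖ ^ 2)) := by
    filter_upwards [Measure.ae_ne volume x, Measure.ae_ne volume y] with z hzx hzy
    rw [← ofReal_add (by positivity) (by positivity), ← ofReal_mul (by positivity),
      ← enorm_eq_nnnorm, ← enorm_eq_nnnorm, ← ofReal_norm, ← ofReal_norm,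
      ← ofReal_mul (norm_nonneg _)]
    exact ofReal_le_ofReal
      (norm_mul_norm_le_of_norm_le_exp_div hc₁ hc₂ hγ h₁ h₂ hb₁ hb₂ hzx hzy)
  calc ∫⁻ z : E3, (‖K₁ x z‖₊ : ℝ≥0∞) * ‖K₂ z y‖₊
      ≤ ∫⁻ z : E3, ENNReal.ofReal C * (ENNReal.ofReal (exp (-γ₁ * ‖z - x‖) / ‖z - x‖ ^ 2) +
        ENNReal.ofReal (exp (-γ₂ * ‖z - y‖) / ‖z - y‖ ^ 2)) := lintegral_mono_ae pointwise
    _ = ENNReal.ofReal C * (ENNReal.ofReal (4 * π / γ₁) + ENNReal.ofReal (4 * π / γ₂)) := by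
        rw [lintegral_const_mul _ (by fun_prop), lintegral_add_left (by fun_prop),
          lintegral_exp_neg_mul_norm_sub_div_sq hγ₁, lintegral_exp_neg_mul_norm_sub_div_sq hγ₂]
    _ = _ := by rw [← ofReal_add (by positivity) (by positivity), ← ofReal_mul (by positivity)]

theorem kernel_composition_bound_general
    (K₁ K₂ : E3 → E3 → ℂ) (c₁ c₂ γ₁ γ₂ : ℝ)
    (hc₁ : 0 < c₁) (hc₂ : 0 < c₂) (hγ₁ : 0 < γ₁) (hγ₂ : 0 < γ₂)
    (hb₁ : ∀ x y : E3, x ≠ y → ‖K₁ x y‖ ≤ c₁ * Real.exp (-γ₁ * ‖x - y‖) / ‖x - y‖)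
    (hb₂ : ∀ x y : E3, x ≠ y → ‖K₂ x y‖ ≤ c₂ * Real.exp (-γ₂ * ‖x - y‖) / ‖x - y‖) :
    ∃ c > 0, ∀ x y : E3,
      ∫⁻ z : E3, (‖K₁ x z‖₊ : ℝ≥0∞) * (‖K₂ z y‖₊ : ℝ≥0∞) ≤
        ENNReal.ofReal (c / min γ₁ γ₂ * Real.exp (-(min γ₁ γ₂ / 2) * ‖x - y‖)) := by
  set γ := min γ₁ γ₂
  have hγ : 0 < γ := lt_min hγ₁ hγ₂
  have hγγ₁ : γ ≤ γ₁ := min_le_left _ _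
  have hγγ₂ : γ ≤ γ₂ := min_le_right _ _
  refine ⟨4 * π * c₁ * c₂, by positivity, fun x y => ?_⟩
  refine (lintegral_nnnorm_mul_nnnorm_le hc₁.le hc₂.le hγ.le hγγ₁ hγγ₂ hγ₁ hγ₂ hb₁ hb₂ x y).trans
    (ofReal_le_ofReal ?_)
  calc c₁ * c₂ / 2 * exp (-(γ / 2) * ‖x - y‖) * (4 * π / γ₁ + 4 * π / γ₂)
      = c₁ * c₂ * 2 * π * exp (-(γ / 2) * ‖x - y‖) * (1 / γ₁ + 1 / γ₂) := by ring
    _ ≤ c₁ * c₂ * 2 * π * exp (-(γ / 2) * ‖x - y‖) * (1 / γ + 1 / γ) := by gcongr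
    _ = 4 * π * c₁ * c₂ / γ * exp (-(γ / 2) * ‖x - y‖) := by ring

theorem kernel_composition_bound
    (K₁ K₂ : E3 → E3 → ℂ) (c₁ c₂ γ₁ γ₂ : ℝ)
    (hc₁ : 0 < c₁) (hc₂ : 0 < c₂) (hγ₁ : 0 < γ₁) (hγ₂ : 0 < γ₂)
    (hK₁ : Measurable (Function.uncurry K₁)) (hK₂ : Measurable (Function.uncurry K₂))
    (hb₁ : ∀ x y : E3, x ≠ y → ‖K₁ x y‖ ≤ c₁ * Real.exp (-γ₁ * ‖x - y‖) / ‖x - y‖)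
    (hb₂ : ∀ x y : E3, x ≠ y → ‖K₂ x y‖ ≤ c₂ * Real.exp (-γ₂ * ‖x - y‖) / ‖x - y‖) :
    ∃ c > 0, ∀ x y : E3,
      ∫⁻ z : E3, (‖K₁ x z‖₊ : ℝ≥0∞) * (‖K₂ z y‖₊ : ℝ≥0∞) ≤
        ENNReal.ofReal (c / min γ₁ γ₂ * Real.exp (-(min γ₁ γ₂ / 2) * ‖x - y‖)) :=
  kernel_composition_bound_general K₁ K₂ c₁ c₂ γ₁ γ₂ hc₁ hc₂ hγ₁ hγ₂ hb₁ hb₂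
end
end

section
/- Let K₁, K₂ : ℝ³×ℝ³ → ℂ satisfy |K₁(x,y)| ≤ c₁ e^{−γ₁|x−y|}/|x−y|² and |K₂(x,y)| ≤ c₂ e^{−γ₂|x−y|}/|x−y| for x ≠ y. Set γ := min{γ₁,γ₂}. Then there exists c > 0 so that for all x ≠ y in ℝ³: ∫_{ℝ³} |K₁(x,z)K₂(z,y)| dz ≤ (c/γ) e^{−(γ/2)|x−y|}/|x−y|. -/
/-!
Put `r₁ = ‖x - z‖`, `r₂ = ‖z - y‖` and `R = ‖x - y‖ ≤ r₁ + r₂`. Half of the exponential decay of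
the two kernels is spent on `e^{-γ (r₁ + r₂) / 2} ≤ e^{-γ R / 2}`, and since one of `r₁, r₂` is at
least `R / 2`, the singular factor obeys `1 / (r₁² r₂) ≤ (2 / R) (1 / r₁² + 1 / r₂²)`. The integrand
is thus dominated by `(2 c₁ c₂ / R) e^{-γ R / 2}` times the sum of two translates of
`e^{-γ ‖u‖ / 2} / ‖u‖²`, whose integral over `ℝ³` is `4π · 2 / γ` in polar coordinates.
-/

open MeasureTheory ENNReal

noncomputable section

open Real Set Metric

theorem mul_div_sq_mul_le_of_le_add {R r₁ r₂ p q : ℝ} (hR : 0 < R) (h₁ : 0 < r₁) (h₂ : 0 < r₂)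
    (hp : 0 ≤ p) (hq : 0 ≤ q) (hp₁ : p ≤ 1) (hq₁ : q ≤ 1) (htri : R ≤ r₁ + r₂) :
    p * q / (r₁ ^ 2 * r₂) ≤ 2 / R * (p / r₁ ^ 2 + q / r₂ ^ 2) := by
  rcases le_total R (2 * r₂) with h | h
  · calc p * q / (r₁ ^ 2 * r₂) ≤ p / (r₁ ^ 2 * (R / 2)) := by
          gcongr; exact mul_le_of_le_one_right hp hq₁; linarith
      _ = 2 / R * (p / r₁ ^ 2) := by field_simp
      _ ≤ _ := by gcongr; exact le_add_of_nonneg_right (by positivity)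
  · have hr : r₂ ≤ r₁ := by linarith
    calc p * q / (r₁ ^ 2 * r₂) ≤ q / (r₁ * r₂ ^ 2) := by
          gcongr ?_ / ?_
          · exact mul_le_of_le_one_left hq hp₁
          · nlinarith [mul_le_mul_of_nonneg_left hr (mul_nonneg h₁.le h₂.le)]
      _ ≤ q / ((R / 2) * r₂ ^ 2) := by gcongr; linarith
      _ = 2 / R * (q / r₂ ^ 2) := by field_simp
      _ ≤ _ := by gcongr; exact le_add_of_nonneg_left (by positivity)

theorem exp_div_sq_mul_exp_div_le {γ R r₁ r₂ : ℝ} (hγ : 0 ≤ γ) (hR : 0 < R) (h₁ : 0 < r₁)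
    (h₂ : 0 < r₂) (htri : R ≤ r₁ + r₂) :
    exp (-γ * r₁) / r₁ ^ 2 * (exp (-γ * r₂) / r₂) ≤
      2 / R * exp (-(γ / 2) * R) *
        (exp (-(γ / 2) * r₁) / r₁ ^ 2 + exp (-(γ / 2) * r₂) / r₂ ^ 2) := by
  have hsq (r : ℝ) : exp (-γ * r) = exp (-(γ / 2) * r) * exp (-(γ / 2) * r) := by
    rw [← exp_add]; ring_nf
  have hpq : exp (-(γ / 2) * r₁) * exp (-(γ / 2) * r₂) ≤ exp (-(γ / 2) * R) := by
    rw [← exp_add, exp_le_exp]; nlinarith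
  calc exp (-γ * r₁) / r₁ ^ 2 * (exp (-γ * r₂) / r₂)
      = (exp (-(γ / 2) * r₁) * exp (-(γ / 2) * r₂)) *
          (exp (-(γ / 2) * r₁) * exp (-(γ / 2) * r₂) / (r₁ ^ 2 * r₂)) := by
        rw [hsq r₁, hsq r₂]; field_simp
    _ ≤ exp (-(γ / 2) * R) *
          (2 / R * (exp (-(γ / 2) * r₁) / r₁ ^ 2 + exp (-(γ / 2) * r₂) / r₂ ^ 2)) := by
        gcongr
        exact mul_div_sq_mul_le_of_le_add hR h₁ h₂ (exp_pos _).le (exp_pos _).le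
          (exp_le_one_iff.2 (by nlinarith)) (exp_le_one_iff.2 (by nlinarith)) htri
    _ = _ := by ring

theorem integral_exp_neg_mul_Ioi_zero {a : ℝ} (ha : 0 < a) :
    ∫ r in Ioi (0 : ℝ), exp (-a * r) = a⁻¹ := by
  simpa using integral_exp_mul_Ioi (neg_neg_of_pos ha) 0

section Polar

variable {E : Type*} [NormedAddCommGroup E] [NormedSpace ℝ E] [MeasurableSpace E] [BorelSpace E]
  [FiniteDimensional ℝ E] (μ : Measure E) [μ.IsAddHaarMeasure] {n : ℕ}

theorem integrable_exp_neg_mul_norm_div_norm_pow (hn : Module.finrank ℝ E = n + 1) {a : ℝ}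
    (ha : 0 < a) :
    Integrable (fun u : E => exp (-a * ‖u‖) / ‖u‖ ^ n) μ := by
  have := Module.nontrivial_of_finrank_eq_succ hn
  rw [integrable_fun_norm_addHaar μ (f := fun r => exp (-a * r) / r ^ n), hn, Nat.add_sub_cancel]
  refine (integrableOn_exp_mul_Ioi (neg_neg_of_pos ha) 0).congr_fun (fun r (hr : 0 < r) => ?_)
    measurableSet_Ioi
  simp only [smul_eq_mul]
  field_simp

theorem integral_exp_neg_mul_norm_div_norm_pow (hn : Module.finrank ℝ E = n + 1) {a : ℝ}
    (ha : 0 < a) :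
    ∫ u, exp (-a * ‖u‖) / ‖u‖ ^ n ∂μ = (n + 1) * μ.real (ball 0 1) / a := by
  have := Module.nontrivial_of_finrank_eq_succ hn
  rw [integral_fun_norm_addHaar μ (fun r => exp (-a * r) / r ^ n), hn, Nat.add_sub_cancel,
    setIntegral_congr_fun measurableSet_Ioi (g := fun r => exp (-a * r))
      (fun r (hr : 0 < r) => by simp only [smul_eq_mul]; field_simp),
    integral_exp_neg_mul_Ioi_zero ha]
  simp only [nsmul_eq_mul, smul_eq_mul, Nat.cast_add, Nat.cast_one]
  ring

theorem lintegral_ofReal_exp_neg_mul_norm_sub_div_add (hn : Module.finrank ℝ E = n + 1) {a : ℝ}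
    (ha : 0 < a) (x y : E) :
    ∫⁻ z, ENNReal.ofReal (exp (-a * ‖x - z‖) / ‖x - z‖ ^ n + exp (-a * ‖z - y‖) / ‖z - y‖ ^ n) ∂μ =
      ENNReal.ofReal (2 * ((n + 1) * μ.real (ball 0 1) / a)) := by
  have hφ : Measurable fun u : E => ENNReal.ofReal (exp (-a * ‖u - x‖) / ‖u - x‖ ^ n) := by
    fun_prop
  have hint : ∫⁻ u, ENNReal.ofReal (exp (-a * ‖u‖) / ‖u‖ ^ n) ∂μ =
      ENNReal.ofReal ((n + 1) * μ.real (ball 0 1) / a) := by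
    rw [← integral_exp_neg_mul_norm_div_norm_pow μ hn ha, ofReal_integral_eq_lintegral_ofReal
      (integrable_exp_neg_mul_norm_div_norm_pow μ hn ha) (.of_forall fun u => by positivity)]
  rw [lintegral_congr fun z => by
      rw [norm_sub_rev x, ENNReal.ofReal_add (by positivity) (by positivity)],
    lintegral_add_left hφ,
    lintegral_sub_right_eq_self (fun u => ENNReal.ofReal (exp (-a * ‖u‖) / ‖u‖ ^ n)) x,
    lintegral_sub_right_eq_self (fun u => ENNReal.ofReal (exp (-a * ‖u‖) / ‖u‖ ^ n)) y, hint,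
    ← ENNReal.ofReal_add (by positivity) (by positivity), two_mul]

end Polar

theorem norm_mul_norm_le_of_exp_decay_bounds {E : Type*} [NormedAddCommGroup E]
    {K₁ K₂ : E → E → ℂ} {c₁ c₂ γ₁ γ₂ γ : ℝ} (hc₁ : 0 ≤ c₁) (hc₂ : 0 ≤ c₂) (hγ : 0 ≤ γ)
    (hγ₁ : γ ≤ γ₁) (hγ₂ : γ ≤ γ₂)
    (hb₁ : ∀ x y : E, x ≠ y → ‖K₁ x y‖ ≤ c₁ * exp (-γ₁ * ‖x - y‖) / ‖x - y‖ ^ 2)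
    (hb₂ : ∀ x y : E, x ≠ y → ‖K₂ x y‖ ≤ c₂ * exp (-γ₂ * ‖x - y‖) / ‖x - y‖)
    {x y z : E} (hxy : x ≠ y) (hzx : z ≠ x) (hzy : z ≠ y) :
    ‖K₁ x z‖ * ‖K₂ z y‖ ≤ 2 * c₁ * c₂ / ‖x - y‖ * exp (-(γ / 2) * ‖x - y‖) *
      (exp (-(γ / 2) * ‖x - z‖) / ‖x - z‖ ^ 2 + exp (-(γ / 2) * ‖z - y‖) / ‖z - y‖ ^ 2) := by
  have h₁ : 0 < ‖x - z‖ := norm_sub_pos_iff.2 hzx.symm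
  have h₂ : 0 < ‖z - y‖ := norm_sub_pos_iff.2 hzy
  calc ‖K₁ x z‖ * ‖K₂ z y‖
      ≤ c₁ * exp (-γ₁ * ‖x - z‖) / ‖x - z‖ ^ 2 * (c₂ * exp (-γ₂ * ‖z - y‖) / ‖z - y‖) :=
        mul_le_mul (hb₁ x z hzx.symm) (hb₂ z y hzy) (norm_nonneg _) (by positivity)
    _ ≤ c₁ * exp (-γ * ‖x - z‖) / ‖x - z‖ ^ 2 * (c₂ * exp (-γ * ‖z - y‖) / ‖z - y‖) := by
        gcongr
    _ = c₁ * c₂ * (exp (-γ * ‖x - z‖) / ‖x - z‖ ^ 2 * (exp (-γ * ‖z - y‖) / ‖z - y‖)) := by ring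
    _ ≤ c₁ * c₂ * (2 / ‖x - y‖ * exp (-(γ / 2) * ‖x - y‖) *
          (exp (-(γ / 2) * ‖x - z‖) / ‖x - z‖ ^ 2 + exp (-(γ / 2) * ‖z - y‖) / ‖z - y‖ ^ 2)) :=
        mul_le_mul_of_nonneg_left (exp_div_sq_mul_exp_div_le hγ (norm_sub_pos_iff.2 hxy)
          h₁ h₂ (norm_sub_le_norm_sub_add_norm_sub x z y)) (by positivity)
    _ = _ := by ring

theorem kernel_composition_bound_sing_general
    (K₁ K₂ : E3 → E3 → ℂ) (c₁ c₂ γ₁ γ₂ : ℝ)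
    (hc₁ : 0 < c₁) (hc₂ : 0 < c₂) (hγ₁ : 0 < γ₁) (hγ₂ : 0 < γ₂)
    (hb₁ : ∀ x y : E3, x ≠ y → ‖K₁ x y‖ ≤ c₁ * Real.exp (-γ₁ * ‖x - y‖) / ‖x - y‖ ^ 2)
    (hb₂ : ∀ x y : E3, x ≠ y → ‖K₂ x y‖ ≤ c₂ * Real.exp (-γ₂ * ‖x - y‖) / ‖x - y‖) :
    ∃ c > 0, ∀ x y : E3, x ≠ y →
      ∫⁻ z : E3, (‖K₁ x z‖₊ : ℝ≥0∞) * (‖K₂ z y‖₊ : ℝ≥0∞) ≤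
        ENNReal.ofReal (c / min γ₁ γ₂ * Real.exp (-(min γ₁ γ₂ / 2) * ‖x - y‖) / ‖x - y‖) := by
  set γ := min γ₁ γ₂
  have hγ : 0 < γ := lt_min hγ₁ hγ₂
  refine ⟨32 * π * c₁ * c₂, by positivity, fun x y hxy => ?_⟩
  set C := 2 * c₁ * c₂ / ‖x - y‖ * exp (-(γ / 2) * ‖x - y‖)
  have hC : 0 ≤ C := by positivity
  have hae : ∀ᵐ z : E3, z ≠ x ∧ z ≠ y :=
    (measure_eq_zero_iff_ae_notMem.1 (measure_singleton x)).and
      (measure_eq_zero_iff_ae_notMem.1 (measure_singleton y))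
  calc ∫⁻ z : E3, (‖K₁ x z‖₊ : ℝ≥0∞) * (‖K₂ z y‖₊ : ℝ≥0∞)
      ≤ ∫⁻ z : E3, ENNReal.ofReal C * ENNReal.ofReal (exp (-(γ / 2) * ‖x - z‖) / ‖x - z‖ ^ 2 +
          exp (-(γ / 2) * ‖z - y‖) / ‖z - y‖ ^ 2) := lintegral_mono_ae <| by
        filter_upwards [hae] with z ⟨hzx, hzy⟩
        rw [← ENNReal.ofReal_mul hC, ← enorm_eq_nnnorm, ← enorm_eq_nnnorm, ← ofReal_norm,
          ← ofReal_norm, ← ENNReal.ofReal_mul (norm_nonneg _)]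
        exact ENNReal.ofReal_le_ofReal <| norm_mul_norm_le_of_exp_decay_bounds hc₁.le hc₂.le
          hγ.le (min_le_left _ _) (min_le_right _ _) hb₁ hb₂ hxy hzx hzy
    _ = _ := by
        rw [lintegral_const_mul' _ _ ofReal_ne_top,
          lintegral_ofReal_exp_neg_mul_norm_sub_div_add volume (by simp) (half_pos hγ),
          ← ENNReal.ofReal_mul hC]
        have hV : volume.real (ball (0 : E3) 1) = π * 4 / 3 := by
          rw [Measure.real, EuclideanSpace.volume_ball_fin_three, ofReal_one, one_pow, one_mul,
            toReal_ofReal (by positivity)]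
        rw [hV]
        congr 1
        simp only [C]
        field_simp
        ring

theorem kernel_composition_bound_sing
    (K₁ K₂ : E3 → E3 → ℂ) (c₁ c₂ γ₁ γ₂ : ℝ)
    (hc₁ : 0 < c₁) (hc₂ : 0 < c₂) (hγ₁ : 0 < γ₁) (hγ₂ : 0 < γ₂)
    (hK₁ : Measurable (Function.uncurry K₁)) (hK₂ : Measurable (Function.uncurry K₂))
    (hb₁ : ∀ x y : E3, x ≠ y → ‖K₁ x y‖ ≤ c₁ * Real.exp (-γ₁ * ‖x - y‖) / ‖x - y‖ ^ 2)
    (hb₂ : ∀ x y : E3, x ≠ y → ‖K₂ x y‖ ≤ c₂ * Real.exp (-γ₂ * ‖x - y‖) / ‖x - y‖) :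
    ∃ c > 0, ∀ x y : E3, x ≠ y →
      ∫⁻ z : E3, (‖K₁ x z‖₊ : ℝ≥0∞) * (‖K₂ z y‖₊ : ℝ≥0∞) ≤
        ENNReal.ofReal (c / min γ₁ γ₂ * Real.exp (-(min γ₁ γ₂ / 2) * ‖x - y‖) / ‖x - y‖) :=
  kernel_composition_bound_sing_general K₁ K₂ c₁ c₂ γ₁ γ₂ hc₁ hc₂ hγ₁ hγ₂ hb₁ hb₂
end
end

section
/- Let K₁, K₂ : ℝ³×ℝ³ → ℂ satisfy |K₁(x,y)| ≤ c e^{−γ|x−y|}/|x−y| and |K₂(x,y)| ≤ c e^{−γ|x−y|}/|x−y|² for x ≠ y. Then for every integer k ≥ 2 there exists C > 0 such that for all x ≠ y in ℝ³: ∫_{(ℝ³)^k} |K₁(x,z₁) K₂(z₁,z₂) ⋯ K₂(z_k,y)| dz₁⋯dz_k ≤ (C/γ^k) e^{−(γ/2^k)|x−y|}/|x−y|. -/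
open MeasureTheory ENNReal

noncomputable section

/-- The chain `x, z₁, …, z_k, y` of points: `chain x y z 0 = x`,
`chain x y z i = z_{i}` for `1 ≤ i ≤ k`, and `chain x y z i = y` for `i > k`. -/
def chain (x y : E3) {k : ℕ} (z : Fin k → E3) (i : ℕ) : E3 :=
  if h : 1 ≤ i ∧ i ≤ k then z ⟨i - 1, by omega⟩ else if i = 0 then x else y

open Function

/-!
Write `G_s(r) = e^{-sr}/r` and `F_s(r) = e^{-sr}/r²`. For `0 < s ≤ g`, the triangle inequality
`|x - y| ≤ |x - z| + |z - y|` together with `1/(ab) ≤ 1/a² + 1/b²` gives the pointwise bound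
`G_s(|x - z|) F_g(|z - y|) ≤ G_{s/2}(|x - y|) (2 F_{s/2}(|z - y|) + F_{s/2}(|x - z|))`,
and `F_{s/2}(|u|)` is integrable on `ℝ³` (in polar coordinates it is `e^{-sr/2} dr`).
Hence `∫ G_s(|x - z|) F_g(|z - y|) dz ≤ M_s G_{s/2}(|x - y|)`, and integrating out
`z₁, …, z_k` one at a time halves the decay rate `k` times.
-/

lemma div_mul_sq_le_of_le_add {a b d : ℝ} (ha : 0 < a) (hb : 0 < b) (hd : d ≤ a + b) :
    d / (a * b ^ 2) ≤ 2 / b ^ 2 + 1 / a ^ 2 := by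
  have hab : 1 / (a * b) ≤ 1 / a ^ 2 + 1 / b ^ 2 := by
    have : 0 ≤ 1 / a * (1 / b) := by positivity
    calc 1 / (a * b) = 1 / a * (1 / b) := (one_div_mul_one_div a b).symm
      _ ≤ 2 * (1 / a) * (1 / b) := by linarith
      _ ≤ (1 / a) ^ 2 + (1 / b) ^ 2 := two_mul_le_add_sq _ _
      _ = 1 / a ^ 2 + 1 / b ^ 2 := by rw [one_div_pow, one_div_pow]
  calc d / (a * b ^ 2) ≤ (a + b) / (a * b ^ 2) := by gcongr
    _ = 1 / b ^ 2 + 1 / (a * b) := by field_simp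
    _ ≤ 2 / b ^ 2 + 1 / a ^ 2 := by
        rw [show 2 / b ^ 2 = 1 / b ^ 2 + 1 / b ^ 2 by ring]; linarith

lemma exp_div_mul_exp_div_sq_le {a b d s g : ℝ} (ha : 0 < a) (hb : 0 < b) (hd : 0 < d)
    (hdab : d ≤ a + b) (hs : 0 < s) (hsg : s ≤ g) :
    Real.exp (-s * a) / a * (Real.exp (-g * b) / b ^ 2) ≤
      Real.exp (-(s / 2) * d) / d *
        (2 * (Real.exp (-(s / 2) * b) / b ^ 2) + Real.exp (-(s / 2) * a) / a ^ 2) := by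
  set u := Real.exp (-(s / 2) * a)
  set v := Real.exp (-(s / 2) * b)
  have hu : u ≤ 1 := Real.exp_le_one_iff.2 (by nlinarith)
  have hv : v ≤ 1 := Real.exp_le_one_iff.2 (by nlinarith)
  have hexp : Real.exp (-s * a) * Real.exp (-g * b) ≤ Real.exp (-(s / 2) * d) * (u * v) := by
    simp only [u, v, ← Real.exp_add]
    exact Real.exp_le_exp.2 (by nlinarith)
  calc Real.exp (-s * a) / a * (Real.exp (-g * b) / b ^ 2)
      = Real.exp (-s * a) * Real.exp (-g * b) / (a * b ^ 2) := by ring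
    _ ≤ Real.exp (-(s / 2) * d) * (u * v) / (a * b ^ 2) := by gcongr
    _ = Real.exp (-(s / 2) * d) / d * (u * v * (d / (a * b ^ 2))) := by field_simp
    _ ≤ Real.exp (-(s / 2) * d) / d * (u * v * (2 / b ^ 2 + 1 / a ^ 2)) := by
        gcongr; exact div_mul_sq_le_of_le_add ha hb hdab
    _ = Real.exp (-(s / 2) * d) / d * (u * (2 * (v / b ^ 2)) + v * (u / a ^ 2)) := by ring
    _ ≤ Real.exp (-(s / 2) * d) / d * (2 * (v / b ^ 2) + u / a ^ 2) := by
        gcongr _ * ?_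
        exact add_le_add (mul_le_of_le_one_left (by positivity) hu)
          (mul_le_of_le_one_left (by positivity) hv)

/-- Equal to `∞` for `r ≤ 0` when `δ ≠ 0`, so that bounds by it also hold on the diagonal. -/
def expKernel (δ : ℕ) (s r : ℝ) : ℝ≥0∞ :=
  ENNReal.ofReal (Real.exp (-s * r)) / ENNReal.ofReal r ^ δ

lemma expKernel_of_pos {δ : ℕ} {s r : ℝ} (hr : 0 < r) :
    expKernel δ s r = ENNReal.ofReal (Real.exp (-s * r) / r ^ δ) := by
  rw [expKernel, ENNReal.ofReal_div_of_pos (by positivity), ENNReal.ofReal_pow hr.le]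

lemma expKernel_of_nonpos {δ : ℕ} (hδ : δ ≠ 0) (s : ℝ) {r : ℝ} (hr : r ≤ 0) :
    expKernel δ s r = ∞ := by
  rw [expKernel, ENNReal.ofReal_of_nonpos hr, zero_pow hδ,
    ENNReal.div_zero (ENNReal.ofReal_pos.2 (Real.exp_pos _)).ne']

lemma expKernel_pos (δ : ℕ) (s r : ℝ) : 0 < expKernel δ s r :=
  ENNReal.div_pos (by simp [Real.exp_pos]) (by simp)

@[fun_prop]
lemma measurable_expKernel (δ : ℕ) (s : ℝ) : Measurable (expKernel δ s) := by
  unfold expKernel; fun_prop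

lemma expKernel_one_mul_expKernel_two_le {a b d s g : ℝ} (hd : d ≤ a + b) (hs : 0 < s)
    (hsg : s ≤ g) :
    expKernel 1 s a * expKernel 2 g b ≤
      expKernel 1 (s / 2) d * (2 * expKernel 2 (s / 2) b + expKernel 2 (s / 2) a) := by
  rcases le_or_gt a 0 with ha | ha
  · simp [expKernel_of_nonpos two_ne_zero _ ha, ENNReal.mul_top (expKernel_pos _ _ _).ne']
  rcases le_or_gt b 0 with hb | hb
  · simp [expKernel_of_nonpos two_ne_zero _ hb, ENNReal.mul_top (expKernel_pos _ _ _).ne']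
  rcases le_or_gt d 0 with hd0 | hd0
  · rw [expKernel_of_nonpos one_ne_zero _ hd0, ENNReal.top_mul]
    · exact le_top
    · exact ((expKernel_pos _ _ _).trans_le le_add_self).ne'
  simp only [expKernel_of_pos ha, expKernel_of_pos hb, expKernel_of_pos hd0, pow_one]
  have := ENNReal.ofReal_le_ofReal (exp_div_mul_exp_div_sq_le ha hb hd0 hd hs hsg)
  rwa [ENNReal.ofReal_mul (by positivity), ENNReal.ofReal_mul (by positivity),
    ENNReal.ofReal_add (by positivity) (by positivity), ENNReal.ofReal_mul (by positivity),
    ENNReal.ofReal_ofNat] at this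

section NormedSpace

variable {E : Type*} [NormedAddCommGroup E] [MeasurableSpace E] [BorelSpace E]

lemma lintegral_expKernel_mul_expKernel_le (μ : Measure E) [μ.IsAddRightInvariant]
    {s g : ℝ} (hs : 0 < s) (hsg : s ≤ g) (x y : E) :
    ∫⁻ z, expKernel 1 s ‖x - z‖ * expKernel 2 g ‖z - y‖ ∂μ ≤
      3 * (∫⁻ u, expKernel 2 (s / 2) ‖u‖ ∂μ) * expKernel 1 (s / 2) ‖x - y‖ := by
  calc ∫⁻ z, expKernel 1 s ‖x - z‖ * expKernel 2 g ‖z - y‖ ∂μ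
      ≤ ∫⁻ z, expKernel 1 (s / 2) ‖x - y‖ *
          (2 * expKernel 2 (s / 2) ‖z - y‖ + expKernel 2 (s / 2) ‖z - x‖) ∂μ := by
        refine lintegral_mono fun z => ?_
        have :=
          expKernel_one_mul_expKernel_two_le (norm_sub_le_norm_sub_add_norm_sub x z y) hs hsg
        rwa [norm_sub_rev x z] at this ⊢
    _ = expKernel 1 (s / 2) ‖x - y‖ * (3 * ∫⁻ u, expKernel 2 (s / 2) ‖u‖ ∂μ) := by
        rw [lintegral_const_mul _ (by fun_prop), lintegral_add_left (by fun_prop),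
          lintegral_const_mul _ (by fun_prop),
          lintegral_sub_right_eq_self (fun u => expKernel 2 (s / 2) ‖u‖) y,
          lintegral_sub_right_eq_self (fun u => expKernel 2 (s / 2) ‖u‖) x]
        ring
    _ = 3 * (∫⁻ u, expKernel 2 (s / 2) ‖u‖ ∂μ) * expKernel 1 (s / 2) ‖x - y‖ := by ring

variable [NormedSpace ℝ E] [FiniteDimensional ℝ E]

lemma integrable_exp_div_norm_sq (μ : Measure E) [μ.IsAddHaarMeasure]
    (hE : 3 ≤ Module.finrank ℝ E) {η : ℝ} (hη : 0 < η) :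
    Integrable (fun u : E => Real.exp (-η * ‖u‖) / ‖u‖ ^ 2) μ := by
  have : Nontrivial E := Module.nontrivial_of_finrank_pos (R := ℝ) (by omega)
  obtain ⟨n, hn⟩ := Nat.exists_eq_add_of_le' hE
  rw [integrable_fun_norm_addHaar μ (f := fun r => Real.exp (-η * r) / r ^ 2), hn]
  refine (integrableOn_rpow_mul_exp_neg_mul_rpow (s := n) (p := 1)
    (by linarith [n.cast_nonneg (α := ℝ)]) one_pos hη).congr_fun
    (fun r (hr : 0 < r) => ?_) measurableSet_Ioi
  have hr2 : r ^ 2 ≠ 0 := by positivity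
  simp only [Real.rpow_one, Real.rpow_natCast, smul_eq_mul, show n + 3 - 1 = n + 2 by omega,
    pow_add]
  field_simp

lemma lintegral_expKernel_two_lt_top (μ : Measure E) [μ.IsAddHaarMeasure]
    (hE : 3 ≤ Module.finrank ℝ E) {η : ℝ} (hη : 0 < η) :
    ∫⁻ u, expKernel 2 η ‖u‖ ∂μ < ∞ := by
  have : Nontrivial E := Module.nontrivial_of_finrank_pos (R := ℝ) (by omega)
  have hae : (fun u : E => expKernel 2 η ‖u‖) =ᵐ[μ]
      fun u => ENNReal.ofReal (Real.exp (-η * ‖u‖) / ‖u‖ ^ 2) := by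
    filter_upwards [Measure.ae_ne μ 0] with u hu
    exact expKernel_of_pos (norm_pos_iff.2 hu)
  rw [lintegral_congr_ae hae]
  exact (integrable_exp_div_norm_sq μ hE hη).lintegral_lt_top

end NormedSpace

lemma lintegral_fin_cons {α : Type*} [MeasureSpace α] [SigmaFinite (volume : Measure α)] {k : ℕ}
    {f : (Fin (k + 1) → α) → ℝ≥0∞} (hf : Measurable f) :
    ∫⁻ z, f z = ∫⁻ w : Fin k → α, ∫⁻ z₀, f (Fin.cons z₀ w) := by
  let e := (MeasurableEquiv.piFinSuccAbove (fun _ : Fin (k + 1) => α) 0).symm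
  rw [volume_pi, ← (measurePreserving_piFinSuccAbove (fun _ => volume) 0).symm.map_eq,
    lintegral_map_equiv,
    lintegral_prod_symm (fun p => f (e p)) (hf.comp e.measurable).aemeasurable, ← volume_pi]
  simp [e, MeasurableEquiv.piFinSuccAbove_symm_apply, Fin.insertNthEquiv, Fin.insertNth_zero']

lemma chain_zero (x y : E3) {k : ℕ} (z : Fin k → E3) : chain x y z 0 = x := by
  simp [chain]

lemma chain_one_of_fin_zero (x y : E3) (z : Fin 0 → E3) : chain x y z 1 = y := by
  simp [chain]

lemma chain_cons (x y z₀ : E3) {k : ℕ} (w : Fin k → E3) (i : ℕ) :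
    chain x y (Fin.cons z₀ w) (i + 1) = chain z₀ y w i := by
  rcases i with _ | i
  · simp [chain]
  · by_cases h : i + 1 ≤ k
    · rw [chain, dif_pos ⟨by omega, by omega⟩, chain, dif_pos ⟨by omega, h⟩]
      exact Fin.cons_succ (α := fun _ => E3) z₀ w ⟨i, by omega⟩
    · rw [chain, dif_neg (by omega), chain, dif_neg (by omega)]
      simp

lemma chain_succ_independent_of_left (x x' y : E3) {k : ℕ} (w : Fin k → E3) (i : ℕ) :
    chain x y w (i + 1) = chain x' y w (i + 1) := by
  simp [chain]

lemma measurable_chain (x y : E3) {k : ℕ} (i : ℕ) :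
    Measurable fun z : Fin k → E3 => chain x y z i := by
  unfold chain
  split_ifs
  · exact measurable_pi_apply _
  · exact measurable_const
  · exact measurable_const

/-- `A(x, z₁) B(z₁, z₂) ⋯ B(z_k, y)`. -/
def chainProd (A B : E3 → E3 → ℝ≥0∞) (x y : E3) {k : ℕ} (z : Fin k → E3) : ℝ≥0∞ :=
  A (chain x y z 0) (chain x y z 1) *
    ∏ i ∈ Finset.range k, B (chain x y z (i + 1)) (chain x y z (i + 2))

lemma measurable_chainProd {A B : E3 → E3 → ℝ≥0∞} (hA : Measurable (uncurry A))
    (hB : Measurable (uncurry B)) (x y : E3) (k : ℕ) :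
    Measurable fun z : Fin k → E3 => chainProd A B x y z := by
  have h2 : ∀ i j, Measurable fun z : Fin k → E3 => (chain x y z i, chain x y z j) :=
    fun i j => (measurable_chain x y i).prodMk (measurable_chain x y j)
  exact ((hA.comp (h2 0 1)).mul (Finset.measurable_prod _ fun i _ => hB.comp (h2 _ _)))

lemma lintegral_chainProd_cons_le {A A' B : E3 → E3 → ℝ≥0∞} {M : ℝ≥0∞}
    (hA : Measurable (uncurry A)) (hB : Measurable (uncurry B)) {x : E3}
    (hAB : ∀ v, ∫⁻ z₀, A x z₀ * B z₀ v ≤ M * A' x v) (y : E3) {k : ℕ} (w : Fin k → E3) :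
    ∫⁻ z₀, chainProd A B x y (Fin.cons z₀ w) ≤ M * chainProd A' B x y w := by
  have hcons : ∀ z₀, chainProd A B x y (Fin.cons z₀ w) =
      A x z₀ * B z₀ (chain x y w 1) *
        ∏ i ∈ Finset.range k, B (chain x y w (i + 1)) (chain x y w (i + 2)) := by
    intro z₀
    simp only [chainProd, chain_zero, Finset.prod_range_succ', chain_cons]
    simp only [chain_succ_independent_of_left z₀ x]
    ring
  simp_rw [hcons]
  rw [lintegral_mul_const _ (by fun_prop), chainProd, chain_zero, ← mul_assoc]
  gcongr
  exact hAB _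

lemma lintegral_chainProd_le {A : ℕ → E3 → E3 → ℝ≥0∞} {B : E3 → E3 → ℝ≥0∞} {M : ℕ → ℝ≥0∞}
    (hA : ∀ n, Measurable (uncurry (A n))) (hB : Measurable (uncurry B))
    (hAB : ∀ n x y, ∫⁻ z, A n x z * B z y ≤ M n * A (n + 1) x y) (k : ℕ) (x y : E3) :
    ∫⁻ z : Fin k → E3, chainProd (A 0) B x y z ≤ (∏ j ∈ Finset.range k, M j) * A k x y := by
  induction k generalizing A M with
  | zero =>
    simp [chainProd, chain_zero, chain_one_of_fin_zero, volume_pi]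
  | succ k ih =>
    calc ∫⁻ z : Fin (k + 1) → E3, chainProd (A 0) B x y z
        = ∫⁻ w : Fin k → E3, ∫⁻ z₀, chainProd (A 0) B x y (Fin.cons z₀ w) :=
          lintegral_fin_cons (measurable_chainProd (hA 0) hB x y _)
      _ ≤ ∫⁻ w : Fin k → E3, M 0 * chainProd (A 1) B x y w :=
          lintegral_mono fun w => lintegral_chainProd_cons_le (hA 0) hB (hAB 0 x) y w
      _ = M 0 * ∫⁻ w : Fin k → E3, chainProd (A 1) B x y w :=
          lintegral_const_mul _ (measurable_chainProd (hA 1) hB x y _)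
      _ ≤ M 0 * ((∏ j ∈ Finset.range k, M (j + 1)) * A (k + 1) x y) := by
          gcongr
          exact ih (fun n => hA (n + 1)) (fun n => hAB (n + 1))
      _ = (∏ j ∈ Finset.range (k + 1), M j) * A (k + 1) x y := by
          rw [Finset.prod_range_succ']; ring

lemma chainProd_le_mul {A A' B B' : E3 → E3 → ℝ≥0∞} {a b : ℝ≥0∞}
    (hA : ∀ u v, A u v ≤ a * A' u v) (hB : ∀ u v, B u v ≤ b * B' u v) (x y : E3) {k : ℕ}
    (z : Fin k → E3) :
    chainProd A B x y z ≤ a * b ^ k * chainProd A' B' x y z := by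
  calc chainProd A B x y z
      ≤ a * A' (chain x y z 0) (chain x y z 1) *
          ∏ i ∈ Finset.range k, b * B' (chain x y z (i + 1)) (chain x y z (i + 2)) :=
        mul_le_mul' (hA _ _) (Finset.prod_le_prod' fun i _ => hB _ _)
    _ = a * b ^ k * chainProd A' B' x y z := by
        rw [Finset.prod_mul_distrib, Finset.prod_const, Finset.card_range, chainProd]; ring

lemma lintegral_chainProd_expKernel_le {γ : ℝ} (hγ : 0 < γ) (k : ℕ) (x y : E3) :
    ∫⁻ z : Fin k → E3, chainProd (fun u v => expKernel 1 γ ‖u - v‖)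
        (fun u v => expKernel 2 γ ‖u - v‖) x y z ≤
      (∏ j ∈ Finset.range k, 3 * ∫⁻ u : E3, expKernel 2 (γ / 2 ^ (j + 1)) ‖u‖) *
        expKernel 1 (γ / 2 ^ k) ‖x - y‖ := by
  have h := lintegral_chainProd_le (A := fun n u v => expKernel 1 (γ / 2 ^ n) ‖u - v‖)
    (B := fun u v => expKernel 2 γ ‖u - v‖)
    (M := fun j => 3 * ∫⁻ u : E3, expKernel 2 (γ / 2 ^ (j + 1)) ‖u‖)
    (fun n => by fun_prop) (by fun_prop) (fun n x y => ?_) k x y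
  · simpa using h
  · rw [pow_succ, ← div_div]
    exact lintegral_expKernel_mul_expKernel_le volume (by positivity)
      (div_le_self hγ.le (one_le_pow₀ one_le_two)) x y

lemma enorm_le_ofReal_mul_expKernel {E F : Type*} [NormedAddCommGroup E] [NormedAddCommGroup F]
    {K : E → E → F} {c γ : ℝ} (hc : 0 < c) {δ : ℕ} (hδ : δ ≠ 0)
    (hK : ∀ x y, x ≠ y → ‖K x y‖ ≤ c * Real.exp (-γ * ‖x - y‖) / ‖x - y‖ ^ δ) (x y : E) :
    ‖K x y‖ₑ ≤ ENNReal.ofReal c * expKernel δ γ ‖x - y‖ := by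
  rcases eq_or_ne x y with rfl | hxy
  · rw [sub_self, norm_zero, expKernel_of_nonpos hδ _ le_rfl,
      ENNReal.mul_top (ENNReal.ofReal_pos.2 hc).ne']
    exact le_top
  rw [expKernel_of_pos (norm_pos_iff.2 (sub_ne_zero.2 hxy)), ← ENNReal.ofReal_mul hc.le,
    ← ofReal_norm, mul_div_assoc']
  exact ENNReal.ofReal_le_ofReal (hK x y hxy)

theorem iterated_kernel_bound_sing_general
    (K₁ K₂ : E3 → E3 → ℂ) (c γ : ℝ) (hc : 0 < c) (hγ : 0 < γ)
    (hb₁ : ∀ x y : E3, x ≠ y → ‖K₁ x y‖ ≤ c * Real.exp (-γ * ‖x - y‖) / ‖x - y‖)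
    (hb₂ : ∀ x y : E3, x ≠ y → ‖K₂ x y‖ ≤ c * Real.exp (-γ * ‖x - y‖) / ‖x - y‖ ^ 2) :
    ∀ k : ℕ, 2 ≤ k → ∃ C > 0, ∀ x y : E3, x ≠ y →
      ∫⁻ z : Fin k → E3,
          (‖K₁ (chain x y z 0) (chain x y z 1)‖₊ : ℝ≥0∞) *
            ∏ i ∈ Finset.range k,
              (‖K₂ (chain x y z (i + 1)) (chain x y z (i + 2))‖₊ : ℝ≥0∞) ≤
        ENNReal.ofReal (C / γ ^ k * Real.exp (-(γ / 2 ^ k) * ‖x - y‖) / ‖x - y‖) := by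
  intro k _
  set D := ENNReal.ofReal c ^ (k + 1) *
    ∏ j ∈ Finset.range k, 3 * ∫⁻ u : E3, expKernel 2 (γ / 2 ^ (j + 1)) ‖u‖
  have hD : D ≠ ∞ := ENNReal.mul_ne_top (ENNReal.pow_ne_top ENNReal.ofReal_ne_top)
    (ENNReal.prod_ne_top fun j _ => ENNReal.mul_ne_top ENNReal.ofNat_ne_top
      (lintegral_expKernel_two_lt_top volume (by simp) (by positivity)).ne)
  refine ⟨(D.toReal + 1) * γ ^ k, by positivity, fun x y hxy => ?_⟩
  have hxy' : 0 < ‖x - y‖ := norm_pos_iff.2 (sub_ne_zero.2 hxy)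
  calc _ = ∫⁻ z : Fin k → E3,
        chainProd (fun u v => ‖K₁ u v‖ₑ) (fun u v => ‖K₂ u v‖ₑ) x y z := rfl
    _ ≤ ∫⁻ z : Fin k → E3, ENNReal.ofReal c ^ (k + 1) * chainProd
          (fun u v => expKernel 1 γ ‖u - v‖) (fun u v => expKernel 2 γ ‖u - v‖) x y z :=
        lintegral_mono fun z => (chainProd_le_mul
          (enorm_le_ofReal_mul_expKernel hc one_ne_zero (by simpa only [pow_one] using hb₁))
          (enorm_le_ofReal_mul_expKernel hc two_ne_zero hb₂) x y z).trans_eq (by ring)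
    _ = ENNReal.ofReal c ^ (k + 1) * ∫⁻ z : Fin k → E3, chainProd
          (fun u v => expKernel 1 γ ‖u - v‖) (fun u v => expKernel 2 γ ‖u - v‖) x y z :=
        lintegral_const_mul _ (measurable_chainProd (by fun_prop) (by fun_prop) x y k)
    _ ≤ D * expKernel 1 (γ / 2 ^ k) ‖x - y‖ := by
        rw [mul_assoc]; gcongr; exact lintegral_chainProd_expKernel_le hγ k x y
    _ = ENNReal.ofReal (D.toReal * (Real.exp (-(γ / 2 ^ k) * ‖x - y‖) / ‖x - y‖)) := by
        rw [expKernel_of_pos hxy', pow_one, ENNReal.ofReal_mul ENNReal.toReal_nonneg,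
          ENNReal.ofReal_toReal hD]
    _ ≤ _ := by
        refine ENNReal.ofReal_le_ofReal ?_
        rw [mul_div_cancel_right₀ _ (pow_ne_zero k hγ.ne'), mul_div_assoc]
        gcongr
        linarith

theorem iterated_kernel_bound_sing
    (K₁ K₂ : E3 → E3 → ℂ) (c γ : ℝ) (hc : 0 < c) (hγ : 0 < γ)
    (hK₁ : Measurable (Function.uncurry K₁)) (hK₂ : Measurable (Function.uncurry K₂))
    (hb₁ : ∀ x y : E3, x ≠ y → ‖K₁ x y‖ ≤ c * Real.exp (-γ * ‖x - y‖) / ‖x - y‖)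
    (hb₂ : ∀ x y : E3, x ≠ y → ‖K₂ x y‖ ≤ c * Real.exp (-γ * ‖x - y‖) / ‖x - y‖ ^ 2) :
    ∀ k : ℕ, 2 ≤ k → ∃ C > 0, ∀ x y : E3, x ≠ y →
      ∫⁻ z : Fin k → E3,
          (‖K₁ (chain x y z 0) (chain x y z 1)‖₊ : ℝ≥0∞) *
            ∏ i ∈ Finset.range k,
              (‖K₂ (chain x y z (i + 1)) (chain x y z (i + 2))‖₊ : ℝ≥0∞) ≤
        ENNReal.ofReal (C / γ ^ k * Real.exp (-(γ / 2 ^ k) * ‖x - y‖) / ‖x - y‖) :=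
  iterated_kernel_bound_sing_general K₁ K₂ c γ hc hγ hb₁ hb₂
end
end
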